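/- Let n be even and λ a spiky function on E_n. If there exists a transversal X such that X and E_n − X lie in the same connected component of G_λ, then λ is not the connectivity function of any matroid. -/

import Mathlib

/-- The ground set of a rank-`n` spike: `n` disjoint legs, where the leg `i` consists of
`x_i = (i, true)` and `y_i = (i, false)`. -/
abbrev En (n : ℕ) := Fin n × Bool

/-- The `i`-th leg `L_i = {x_i, y_i}`. -/
def leg (n : ℕ) (i : Fin n) : Set (En n) := {(i, true), (i, false)}

/-- A transversal: a set containing exactly one element of each leg. -/
def IsTransversal {n : ℕ} (X : Set (En n)) : Prop :=
  ∀ i : Fin n, ((i, true) ∈ X ∧ (i, false) ∉ X) ∨ ((i, true) ∉ X ∧ (i, false) ∈ X)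

/-- The hypercube graph `H_n` on transversals: two transversals are adjacent iff they
differ in exactly one element (i.e. their symmetric difference has two elements). -/
def Hn (n : ℕ) : SimpleGraph (Set (En n)) where
  Adj X Y := IsTransversal X ∧ IsTransversal Y ∧ (symmDiff X Y).ncard = 2
  symm := ⟨fun X Y ⟨h1, h2, h3⟩ => ⟨h2, h1, by rwa [symmDiff_comm]⟩⟩
  loopless := ⟨fun X ⟨_, _, h3⟩ => by
    simp [symmDiff_self, Set.bot_eq_empty] at h3⟩

/-- `I` is an independent set of the hypercube graph `H_n`. -/
def IndepInHn (n : ℕ) (I : Set (Set (En n))) : Prop :=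
  (∀ X ∈ I, IsTransversal X) ∧ ∀ X ∈ I, ∀ Y ∈ I, ¬ (Hn n).Adj X Y

/-- `l(X)`: the number of legs which `X` meets. -/
noncomputable def legCount {n : ℕ} (X : Set (En n)) : ℕ :=
  Set.ncard {i : Fin n | (i, true) ∈ X ∨ (i, false) ∈ X}

/-- The rank of a set `X` in a matroid `M`: the largest cardinality of an independent
subset of `X`. -/
noncomputable def mrank {α : Type*} (M : Matroid α) (X : Set α) : ℕ :=
  sSup {k | ∃ I, M.Indep I ∧ I ⊆ X ∧ I.ncard = k}

/-- The connectivity function of a matroid: μ_M(X) = r(X) + r(E−X) − r(E). -/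
noncomputable def mconn {α : Type*} (M : Matroid α) (X : Set α) : ℤ :=
  (mrank M X : ℤ) + (mrank M (M.E \ X) : ℤ) - (mrank M M.E : ℤ)

/-- A circuit of a matroid: a minimal dependent subset of the ground set. -/
def IsCircuit {α : Type*} (M : Matroid α) (C : Set α) : Prop :=
  C ⊆ M.E ∧ ¬ M.Indep C ∧ ∀ D ⊂ C, M.Indep D

/-- The circuits `{x_i, y_i, x_j, y_j}` for `i < j` (i.e. unions of two distinct legs). -/
def LegPairs (n : ℕ) : Set (Set (En n)) :=
  {C | ∃ i j : Fin n, i ≠ j ∧ C = leg n i ∪ leg n j}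

/-- The circuit collection of the spike `S(I)`: unions of two legs, the transversals
in `I`, and all `(n+1)`-element sets containing none of the preceding circuits. -/
def SpikeCircuits (n : ℕ) (I : Set (Set (En n))) : Set (Set (En n)) :=
  (LegPairs n ∪ I) ∪ {C | C.ncard = n + 1 ∧ ∀ D ∈ LegPairs n ∪ I, ¬ D ⊆ C}

open Classical in
/-- The rank function of the free spike `S(∅)` (every rank-`n` spike has this rank
function away from the transversals). -/
noncomputable def freeSpikeRank (n : ℕ) (X : Set (En n)) : ℕ :=
  if ∀ i : Fin n, ¬ Disjoint (leg n i) X then n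
  else if ∃ i, leg n i ⊆ X then legCount X + 1
  else X.ncard

/-- `λ_n(X) = r_n(X) + r_n(E_n − X) − n`: the common value of the connectivity function
of any rank-`n` spike on a non-transversal set `X`. -/
noncomputable def lamN (n : ℕ) (X : Set (En n)) : ℤ :=
  (freeSpikeRank n X : ℤ) + (freeSpikeRank n Xᶜ : ℤ) - (n : ℤ)

/-- A spiky function: symmetric, extends `λ_n` on non-transversals, takes values in
`{n−2, n−1, n}` on transversals, and satisfies `λ(X) + λ(Y) ≥ 2n−2` for transversals
`X`, `Y` differing in exactly one element. -/
noncomputable def IsSpiky (n : ℕ) (lam : Set (En n) → ℕ) : Prop :=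
  (∀ X, lam X = lam Xᶜ) ∧
  (∀ X, ¬ IsTransversal X → (lam X : ℤ) = lamN n X) ∧
  (∀ X, IsTransversal X → lam X = n - 2 ∨ lam X = n - 1 ∨ lam X = n) ∧
  (∀ X Y, IsTransversal X → IsTransversal Y → (symmDiff X Y).ncard = 2 →
    2 * n - 2 ≤ lam X + lam Y)

/-- The induced subgraph of `G` on the vertex set `S` (other vertices become isolated). -/
def inducedOn {α : Type*} (G : SimpleGraph α) (S : Set α) : SimpleGraph α where
  Adj a b := G.Adj a b ∧ a ∈ S ∧ b ∈ S
  symm := ⟨fun a b ⟨h, ha, hb⟩ => ⟨h.symm, hb, ha⟩⟩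
  loopless := ⟨fun a ⟨h, _, _⟩ => G.loopless.irrefl a h⟩

/-- `G_λ`: the induced subgraph of `H_n` on the transversals `X` with `λ(X) = n − 1`. -/
noncomputable def Glam (n : ℕ) (lam : Set (En n) → ℕ) : SimpleGraph (Set (En n)) :=
  inducedOn (Hn n) {Z | lam Z = n - 1}

/-!
If `λ` is the connectivity function of a matroid `M` on `E_n`, its values `λ_n` on
non-transversals pin down ranks: `r(E) = n`, and for a transversal `X` and a leg `L`,
`r(X - L) = n - 1` and `r(X ∪ L) = n`. Hence when `λ(X) = n - 1` exactly one of `X` and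
`E - X` is independent, and by submodularity two adjacent transversals are never both
dependent. Applying this to the two ends of an edge of `G_λ` and to their complements shows
that independence flips along every edge of `G_λ`; so does parity. Thus "`X` is independent
iff its parity is even" is constant on components of `G_λ`. For `n` even, `X` and `E_n - X`
have the same parity while exactly one of them is independent, so they lie in different
components.
-/

open Set

lemma SimpleGraph.Reachable.apply_eq {V β : Type*} {G : SimpleGraph V} {f : V → β}
    (hf : ∀ u v, G.Adj u v → f u = f v) {u v : V} (h : G.Reachable u v) : f u = f v := by
  rw [SimpleGraph.reachable_iff_reflTransGen] at h
  induction h with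
  | refl => rfl
  | tail _ hadj ih => exact ih.trans (hf _ _ hadj)

lemma compl_insert_diff_singleton {α : Type*} {s : Set α} {x y : α} (hx : x ∈ s)
    (hy : y ∉ s) : (insert y (s \ {x}))ᶜ = insert x (sᶜ \ {y}) := by
  ext z
  by_cases hzx : z = x <;> by_cases hzy : z = y <;> simp_all

lemma even_ncard_symmDiff_singleton_iff {α : Type*} {s : Set α} (hs : s.Finite) (a : α) :
    Even (symmDiff s {a}).ncard ↔ ¬ Even s.ncard := by
  by_cases ha : a ∈ s
  · have hdiff : symmDiff s {a} = s \ {a} := by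
      ext x
      by_cases hxa : x = a <;> simp_all [mem_symmDiff]
    obtain ⟨k, hk⟩ := Nat.exists_eq_succ_of_ne_zero ((ncard_pos hs).2 ⟨a, ha⟩).ne'
    rw [hdiff, ncard_sdiff_singleton_of_mem ha, hk, Nat.succ_sub_one, Nat.even_add_one, not_not]
  · have hins : symmDiff s {a} = insert a s := by
      ext x
      by_cases hxa : x = a <;> simp_all [mem_symmDiff]
    rw [hins, ncard_insert_of_notMem ha hs, Nat.even_add_one]

section MatroidRank

variable {α : Type*} {M : Matroid α} {X Y : Set α}

lemma mrank_eq_eRk [M.RankFinite] (X : Set α) : (mrank M X : ℕ∞) = M.eRk X := by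
  obtain ⟨I, hI⟩ := M.exists_isBasis' X
  have hmax : IsGreatest {k | ∃ J, M.Indep J ∧ J ⊆ X ∧ J.ncard = k} I.ncard := by
    refine ⟨⟨I, hI.indep, hI.subset, rfl⟩, ?_⟩
    rintro _ ⟨J, hJ, hJX, rfl⟩
    have hle : J.encard ≤ I.encard := hI.eRk_eq_encard ▸ hJ.encard_le_eRk_of_subset hJX
    rwa [← hJ.finite.cast_ncard_eq, ← hI.indep.finite.cast_ncard_eq, Nat.cast_le] at hle
  rw [mrank, hmax.csSup_eq, hI.indep.finite.cast_ncard_eq, hI.eRk_eq_encard]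

lemma mrank_mono [M.RankFinite] (hXY : X ⊆ Y) : mrank M X ≤ mrank M Y := by
  have := M.eRk_mono hXY
  rwa [← mrank_eq_eRk, ← mrank_eq_eRk, Nat.cast_le] at this

lemma mrank_le_ncard [M.RankFinite] (hX : X.Finite := by toFinite_tac) : mrank M X ≤ X.ncard := by
  have := M.eRk_le_encard X
  rwa [← mrank_eq_eRk, ← hX.cast_ncard_eq, Nat.cast_le] at this

lemma mrank_inter_add_mrank_union_le [M.RankFinite] (X Y : Set α) :
    mrank M (X ∩ Y) + mrank M (X ∪ Y) ≤ mrank M X + mrank M Y := by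
  have := M.eRk_inter_add_eRk_union_le X Y
  simp only [← mrank_eq_eRk] at this
  exact_mod_cast this

lemma indep_iff_mrank_eq_ncard [M.RankFinite] (hX : X.Finite := by toFinite_tac) :
    M.Indep X ↔ mrank M X = X.ncard := by
  rw [Matroid.indep_iff_eRk_eq_encard_of_finite hX, ← mrank_eq_eRk, ← hX.cast_ncard_eq,
    Nat.cast_inj]

lemma mconn_eq_of_ground_eq_univ (hE : M.E = univ) (X : Set α) :
    mconn M X = mrank M X + mrank M Xᶜ - mrank M univ := by
  rw [mconn, hE, ← compl_eq_univ_sdiff]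

end MatroidRank

section Spike

variable {n : ℕ} {X Y : Set (En n)} {i : Fin n} {c : Bool}

lemma mem_leg_iff {p : En n} : p ∈ leg n i ↔ p.1 = i := by
  obtain ⟨j, _ | _⟩ := p <;> simp [leg, eq_comm]

lemma not_disjoint_leg_iff : ¬ Disjoint (leg n i) Y ↔ (i, true) ∈ Y ∨ (i, false) ∈ Y := by
  simp only [leg, disjoint_insert_left, disjoint_singleton_left, not_and_or, not_not]

lemma not_isTransversal_of_disjoint (h : Disjoint (leg n i) Y) : ¬ IsTransversal Y :=
  fun hY ↦ not_disjoint_leg_iff.2 ((hY i).imp And.left And.right) h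

lemma IsTransversal.compl (hX : IsTransversal X) : IsTransversal Xᶜ := by
  intro i; rcases hX i with ⟨h1, h2⟩ | ⟨h1, h2⟩ <;> simp [h1, h2]

lemma IsTransversal.mem_not_iff (hX : IsTransversal X) : (i, !c) ∈ X ↔ (i, c) ∉ X := by
  rcases hX i with ⟨h1, h2⟩ | ⟨h1, h2⟩ <;> cases c <;> simp [h1, h2]

lemma IsTransversal.exists_mem (hX : IsTransversal X) (i : Fin n) : ∃ c, (i, c) ∈ X :=
  (hX i).elim (fun h ↦ ⟨true, h.1⟩) (fun h ↦ ⟨false, h.2⟩)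

lemma IsTransversal.ncard_eq (hX : IsTransversal X) : X.ncard = n := by
  choose σ hσ using hX.exists_mem
  have hrange : X = range (fun i ↦ (i, σ i)) := by
    ext ⟨i, c⟩
    simp only [mem_range, Prod.mk.injEq, exists_eq_left]
    rcases Bool.eq_or_eq_not c (σ i) with rfl | rfl
    · simpa using hσ i
    · simpa [hX.mem_not_iff] using hσ i
  rw [hrange, ncard_range_of_injective (fun i j h ↦ (Prod.ext_iff.1 h).1),
    Nat.card_eq_fintype_card, Fintype.card_fin]

lemma IsTransversal.ne_compl [NeZero n] (hX : IsTransversal X) : X ≠ Xᶜ := fun h ↦ by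
  obtain ⟨c, hc⟩ := hX.exists_mem 0
  exact (h ▸ hc : (0, c) ∈ Xᶜ) hc

lemma IsTransversal.diff_leg_eq (hX : IsTransversal X) (hc : (i, c) ∈ X) :
    X \ leg n i = X \ {(i, c)} := by
  ext ⟨j, d⟩
  simp only [mem_sdiff, mem_leg_iff, mem_singleton_iff, Prod.mk.injEq]
  refine ⟨fun h ↦ ⟨h.1, fun hji ↦ h.2 hji.1⟩, fun h ↦ ⟨h.1, fun hji ↦ ?_⟩⟩
  subst hji
  rcases Bool.eq_or_eq_not d c with rfl | rfl
  · exact h.2 ⟨rfl, rfl⟩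
  · exact hX.mem_not_iff.1 h.1 hc

lemma IsTransversal.ncard_diff_leg (hX : IsTransversal X) (i : Fin n) :
    (X \ leg n i).ncard = n - 1 := by
  obtain ⟨c, hc⟩ := hX.exists_mem i
  rw [hX.diff_leg_eq hc, ncard_sdiff_singleton_of_mem hc, hX.ncard_eq]

lemma IsTransversal.mem_symmDiff_not_iff (hX : IsTransversal X) (hY : IsTransversal Y) :
    (i, !c) ∈ symmDiff X Y ↔ (i, c) ∈ symmDiff X Y := by
  simp only [mem_symmDiff, hX.mem_not_iff, hY.mem_not_iff]
  tauto

lemma exists_eq_symmDiff_leg_of_adj (h : (Hn n).Adj X Y) : ∃ i, Y = symmDiff X (leg n i) := by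
  obtain ⟨hX, hY, hcard⟩ := h
  obtain ⟨⟨i, c⟩, hc⟩ : (symmDiff X Y).Nonempty := nonempty_of_ncard_ne_zero (by omega)
  have hsub : leg n i ⊆ symmDiff X Y := by
    rintro ⟨j, d⟩ hj
    obtain rfl : j = i := mem_leg_iff.1 hj
    rcases Bool.eq_or_eq_not d c with rfl | rfl
    exacts [hc, (hX.mem_symmDiff_not_iff hY).2 hc]
  have hleg : leg n i = symmDiff X Y := by
    refine eq_of_subset_of_ncard_le hsub ?_
    rw [hcard, leg, ncard_pair (by simp)]
  exact ⟨i, by rw [hleg, symmDiff_symmDiff_cancel_left]⟩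

lemma Hn_adj_compl (h : (Hn n).Adj X Y) : (Hn n).Adj Xᶜ Yᶜ :=
  ⟨h.1.compl, h.2.1.compl, by rw [compl_symmDiff_compl]; exact h.2.2⟩

end Spike

section Parity

variable {n : ℕ} {X : Set (En n)}

/-- The parity of a transversal `X` is the parity of `(xLegs X).ncard`. -/
def xLegs (X : Set (En n)) : Set (Fin n) := {i | (i, true) ∈ X}

lemma even_ncard_xLegs_compl_iff (heven : Even n) :
    Even (xLegs Xᶜ).ncard ↔ Even (xLegs X).ncard := by
  have hcompl : xLegs Xᶜ = (xLegs X)ᶜ := rfl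
  have hle : (xLegs X).ncard ≤ n := by
    simpa using ncard_le_ncard (subset_univ (xLegs X))
  rw [hcompl, ncard_compl, Nat.card_eq_fintype_card, Fintype.card_fin, Nat.even_sub' hle,
    ← Nat.not_even_iff_odd, ← Nat.not_even_iff_odd]
  simp [heven]

lemma even_ncard_xLegs_iff_of_adj {Y : Set (En n)} (h : (Hn n).Adj X Y) :
    Even (xLegs Y).ncard ↔ ¬ Even (xLegs X).ncard := by
  obtain ⟨i, rfl⟩ := exists_eq_symmDiff_leg_of_adj h
  have hxLegs : xLegs (symmDiff X (leg n i)) = symmDiff (xLegs X) {i} := by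
    ext j
    simp [xLegs, mem_symmDiff, mem_leg_iff]
  rw [hxLegs, even_ncard_symmDiff_singleton_iff (toFinite _)]

end Parity

section FreeSpike

variable {n : ℕ} {X Y : Set (En n)} {a b : Fin n} {c d : Bool}

lemma freeSpikeRank_of_isTransversal_subset (hX : IsTransversal X) (hXY : X ⊆ Y) :
    freeSpikeRank n Y = n := by
  rw [freeSpikeRank, if_pos]
  intro i
  rw [not_disjoint_leg_iff]
  exact (hX i).imp (fun h ↦ hXY h.1) (fun h ↦ hXY h.2)

lemma IsTransversal.lamN_diff_leg (hX : IsTransversal X) (i : Fin n) :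
    lamN n (X \ leg n i) = n - 1 := by
  have hrank : freeSpikeRank n (X \ leg n i) = n - 1 := by
    rw [freeSpikeRank, if_neg (not_forall.2 ⟨i, not_not.2 disjoint_sdiff_right⟩), if_neg,
      hX.ncard_diff_leg]
    rintro ⟨j, hj⟩
    rcases hX j with ⟨-, h⟩ | ⟨h, -⟩
    exacts [h (hj (by simp [leg])).1, h (hj (by simp [leg])).1]
  have hcompl : freeSpikeRank n (X \ leg n i)ᶜ = n :=
    freeSpikeRank_of_isTransversal_subset hX.compl (compl_subset_compl.2 sdiff_subset)
  have := i.pos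
  rw [lamN, hrank, hcompl]
  omega

lemma IsTransversal.disjoint_leg_insert_diff (hX : IsTransversal X) (hac : (a, c) ∈ X)
    (hab : a ≠ b) : Disjoint (leg n a) (insert (b, d) (X \ {(a, c)})) := by
  rw [Set.disjoint_left]
  rintro ⟨j, e⟩ hj he
  obtain rfl : j = a := mem_leg_iff.1 hj
  simp only [mem_insert_iff, mem_sdiff, mem_singleton_iff, Prod.mk.injEq] at he
  rcases he with ⟨rfl, -⟩ | ⟨he, hne⟩
  · exact hab rfl
  · rcases Bool.eq_or_eq_not e c with rfl | rfl
    exacts [hne (by simp), hX.mem_not_iff.1 he hac]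

lemma IsTransversal.freeSpikeRank_insert_diff (hX : IsTransversal X) (hac : (a, c) ∈ X)
    (hbd : (b, d) ∉ X) (hab : a ≠ b) : freeSpikeRank n (insert (b, d) (X \ {(a, c)})) = n := by
  set Z := insert (b, d) (X \ {(a, c)})
  have hmeets : ∀ i, (i, true) ∈ Z ∨ (i, false) ∈ Z ↔ i ≠ a := by
    intro i
    constructor
    · rintro h rfl
      exact not_disjoint_leg_iff.2 h (hX.disjoint_leg_insert_diff hac hab)
    · intro hia
      obtain ⟨e, he⟩ := hX.exists_mem i
      have hZ : (i, e) ∈ Z := Or.inr ⟨he, fun h ↦ hia (Prod.ext_iff.1 h).1⟩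
      cases e
      exacts [Or.inr hZ, Or.inl hZ]
  have hlegb : leg n b ⊆ Z := by
    rintro ⟨j, e⟩ hj
    obtain rfl : j = b := mem_leg_iff.1 hj
    rcases Bool.eq_or_eq_not e d with rfl | rfl
    · exact mem_insert _ _
    · exact Or.inr ⟨hX.mem_not_iff.2 hbd, fun h ↦ hab (Prod.ext_iff.1 h).1.symm⟩
  have hlegCount : legCount Z = n - 1 := by
    have hlegs : {i : Fin n | (i, true) ∈ Z ∨ (i, false) ∈ Z} = {a}ᶜ := by
      ext i
      exact hmeets i
    rw [legCount, hlegs, ncard_compl, ncard_singleton, Nat.card_eq_fintype_card, Fintype.card_fin]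
  have := a.pos
  rw [freeSpikeRank, if_neg (fun h ↦ h a (hX.disjoint_leg_insert_diff hac hab)),
    if_pos ⟨b, hlegb⟩, hlegCount]
  omega

lemma IsTransversal.lamN_insert_diff (hX : IsTransversal X) (hac : (a, c) ∈ X)
    (hbd : (b, d) ∉ X) (hab : a ≠ b) : lamN n (insert (b, d) (X \ {(a, c)})) = n := by
  rw [lamN, compl_insert_diff_singleton hac hbd, hX.freeSpikeRank_insert_diff hac hbd hab,
    hX.compl.freeSpikeRank_insert_diff hbd (not_not.2 hac) hab.symm]
  ring

lemma IsTransversal.ncard_insert_diff (hX : IsTransversal X) (hac : (a, c) ∈ X)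
    (hbd : (b, d) ∉ X) : (insert (b, d) (X \ {(a, c)})).ncard = n := by
  have := a.pos
  rw [ncard_insert_of_notMem (fun h ↦ hbd h.1), ncard_sdiff_singleton_of_mem hac, hX.ncard_eq]
  omega

end FreeSpike

section Connectivity

variable {n : ℕ} {lam : Set (En n) → ℕ} {M : Matroid (En n)} {X Y : Set (En n)}

lemma IsTransversal.mrank_le (hX : IsTransversal X) (M : Matroid (En n)) : mrank M X ≤ n :=
  (mrank_le_ncard).trans_eq hX.ncard_eq

lemma mrank_univ_eq_of_conn (hn : 2 ≤ n)
    (hM : ∀ X, (lam X : ℤ) = mrank M X + mrank M Xᶜ - mrank M univ)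
    (hlam : ∀ X, ¬ IsTransversal X → (lam X : ℤ) = lamN n X) :
    mrank M univ = n := by
  set a : Fin n := ⟨0, by omega⟩
  set b : Fin n := ⟨1, by omega⟩
  have hab : a ≠ b := by simp [a, b, Fin.ext_iff]
  set T : Set (En n) := {p | p.2 = true}
  have hT : IsTransversal T := fun i ↦ by simp [T]
  have haT : (a, true) ∈ T := rfl
  have hbT : (b, false) ∉ T := by simp [T]
  -- `Z = {x_i : i ≠ a} ∪ {y_b}` and `Zᶜ` have `n` elements each while `λ(Z) = n`,
  -- which forces `r(Z) = r(Zᶜ) = r(E) = n`.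
  set Z := insert (b, false) (T \ {(a, true)})
  have hZ : (lam Z : ℤ) = n :=
    (hlam Z (not_isTransversal_of_disjoint (hT.disjoint_leg_insert_diff haT hab))).trans
      (hT.lamN_insert_diff haT hbT hab)
  have hZle : mrank M Z ≤ n := (mrank_le_ncard).trans_eq (hT.ncard_insert_diff haT hbT)
  have hZcle : mrank M Zᶜ ≤ n := by
    have hcard := hT.compl.ncard_insert_diff hbT (not_not.2 haT)
    rw [← compl_insert_diff_singleton haT hbT] at hcard
    exact (mrank_le_ncard).trans_eq hcard
  have := mrank_mono (M := M) (subset_univ Z)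
  have := mrank_mono (M := M) (subset_univ Zᶜ)
  have := hM Z
  omega

lemma IsTransversal.mrank_diff_leg_and_compl (hn : 2 ≤ n)
    (hM : ∀ X, (lam X : ℤ) = mrank M X + mrank M Xᶜ - mrank M univ)
    (hlam : ∀ X, ¬ IsTransversal X → (lam X : ℤ) = lamN n X)
    (hX : IsTransversal X) (i : Fin n) :
    mrank M (X \ leg n i) = n - 1 ∧ mrank M (X \ leg n i)ᶜ = n := by
  have hlamX : (lam (X \ leg n i) : ℤ) = n - 1 :=
    (hlam _ (not_isTransversal_of_disjoint disjoint_sdiff_right)).trans (hX.lamN_diff_leg i)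
  have hle : mrank M (X \ leg n i) ≤ n - 1 := (mrank_le_ncard).trans_eq (hX.ncard_diff_leg i)
  have := mrank_univ_eq_of_conn hn hM hlam
  have := mrank_mono (M := M) (subset_univ (X \ leg n i)ᶜ)
  have := hM (X \ leg n i)
  omega

lemma IsTransversal.indep_iff_not_indep_compl (hn : 2 ≤ n)
    (hM : ∀ X, (lam X : ℤ) = mrank M X + mrank M Xᶜ - mrank M univ)
    (hlam : ∀ X, ¬ IsTransversal X → (lam X : ℤ) = lamN n X)
    (hX : IsTransversal X) (hX1 : lam X = n - 1) :
    M.Indep X ↔ ¬ M.Indep Xᶜ := by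
  rw [indep_iff_mrank_eq_ncard, indep_iff_mrank_eq_ncard, hX.ncard_eq, hX.compl.ncard_eq]
  have := hX.mrank_le M
  have := hX.compl.mrank_le M
  have := mrank_univ_eq_of_conn hn hM hlam
  have := hM X
  omega

lemma indep_or_indep_of_Hn_adj (hn : 2 ≤ n)
    (hM : ∀ X, (lam X : ℤ) = mrank M X + mrank M Xᶜ - mrank M univ)
    (hlam : ∀ X, ¬ IsTransversal X → (lam X : ℤ) = lamN n X)
    (h : (Hn n).Adj X Y) : M.Indep X ∨ M.Indep Y := by
  have hX := h.1
  have hY := h.2.1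
  obtain ⟨i, rfl⟩ := exists_eq_symmDiff_leg_of_adj h
  have hinter : X ∩ symmDiff X (leg n i) = X \ leg n i := by
    ext p; simp only [mem_inter_iff, mem_symmDiff, mem_sdiff]; tauto
  have hunion : X ∪ symmDiff X (leg n i) = (Xᶜ \ leg n i)ᶜ := by
    ext p; simp only [mem_union, mem_symmDiff, mem_compl_iff, mem_sdiff]; tauto
  have hsub := mrank_inter_add_mrank_union_le (M := M) X (symmDiff X (leg n i))
  rw [hinter, hunion, (hX.mrank_diff_leg_and_compl hn hM hlam i).1,
    (hX.compl.mrank_diff_leg_and_compl hn hM hlam i).2] at hsub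
  rw [indep_iff_mrank_eq_ncard, indep_iff_mrank_eq_ncard, hX.ncard_eq, hY.ncard_eq]
  have := hX.mrank_le M
  have := hY.mrank_le M
  omega

lemma indep_iff_not_indep_of_Glam_adj (hn : 2 ≤ n)
    (hM : ∀ X, (lam X : ℤ) = mrank M X + mrank M Xᶜ - mrank M univ)
    (hlam : ∀ X, ¬ IsTransversal X → (lam X : ℤ) = lamN n X)
    (h : (Glam n lam).Adj X Y) : M.Indep X ↔ ¬ M.Indep Y := by
  obtain ⟨hXY, hX1, hY1⟩ := h
  have := hXY.1.indep_iff_not_indep_compl hn hM hlam hX1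
  have := hXY.2.1.indep_iff_not_indep_compl hn hM hlam hY1
  have := indep_or_indep_of_Hn_adj hn hM hlam hXY
  have := indep_or_indep_of_Hn_adj hn hM hlam (Hn_adj_compl hXY)
  tauto

end Connectivity

/-- For even `n`, if some transversal `X` has `X` and `E_n − X` in the same component of
`G_λ`, then the spiky function `λ` is not the connectivity function of any matroid. -/
theorem stmt16 {n : ℕ} (hn : 2 < n) (heven : Even n)
    (lam : Set (En n) → ℕ) (hs : IsSpiky n lam)
    (h : ∃ X, IsTransversal X ∧ (Glam n lam).Reachable X Xᶜ) :
    ¬ ∃ M : Matroid (En n), M.E = Set.univ ∧ ∀ X, (lam X : ℤ) = mconn M X := by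
  rintro ⟨M, hE, hconn⟩
  obtain ⟨X, hX, hreach⟩ := h
  have hM (Y : Set (En n)) : (lam Y : ℤ) = mrank M Y + mrank M Yᶜ - mrank M univ :=
    (hconn Y).trans (mconn_eq_of_ground_eq_univ hE Y)
  have hlam := hs.2.1
  have : NeZero n := ⟨by omega⟩
  -- Being independent and having even parity flip together along every edge of `G_λ`.
  set P : Set (En n) → Prop := fun A ↦ (M.Indep A ↔ Even (xLegs A).ncard)
  have hinv : P X ↔ P Xᶜ := by
    refine Iff.of_eq (hreach.apply_eq ?_)
    intro A C hAC
    have := indep_iff_not_indep_of_Glam_adj hn.le hM hlam hAC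
    have := even_ncard_xLegs_iff_of_adj hAC.1
    exact propext (by tauto)
  obtain ⟨W⟩ := hreach
  have hlamX : lam X = n - 1 := (W.adj_snd fun hnil ↦ hX.ne_compl hnil.eq).2.1
  have := hX.indep_iff_not_indep_compl hn.le hM hlam hlamX
  simp only [P, even_ncard_xLegs_compl_iff heven] at hinv
  tauto
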